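/- arXiv:1904.09748 — 2 statements merged into one kernel-verified Lean document; each statement's English description precedes it below -/
import Mathlib

section
/- Fix integers m ≥ 1 and n ≥ 1. Call a function h : {1, …, n} → ℕ Shi-admissible (for m) if 0 belongs to the range of h, and for every a in the range of h with a < max(range h), letting b be the smallest element of the range of h that is greater than a, one has b ≤ a + m, and moreover if b = a + m then min{i : h(i) = a} < max{j : h(j) = b}. Then the map sending h to the affine subspace {x ∈ ℝ^n : x_i + h(i) = x_j + h(j) for all i, j} is a bijection from the set of Shi-admissible functions onto the set L_1(S^m_n) of 1-dimensional flats of the extended Shi arrangement S^m_n. -/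
open Set

/-- The affine hyperplane `{x : ℝⁿ | x i - x j = a}`. -/
def hyp (n : ℕ) (i j : Fin n) (a : ℤ) : Set (Fin n → ℝ) :=
  {x | x i - x j = (a : ℝ)}

/-- The extended Catalan arrangement `C^m_n`: hyperplanes `x_i - x_j = a` for
`i < j` and `-m ≤ a ≤ m`. -/
def CatalanArr (m n : ℕ) : Set (Set (Fin n → ℝ)) :=
  {H | ∃ i j : Fin n, ∃ a : ℤ, i < j ∧ -(m : ℤ) ≤ a ∧ a ≤ (m : ℤ) ∧ H = hyp n i j a}

/-- The extended Shi arrangement `S^m_n`: hyperplanes `x_i - x_j = a` for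
`i < j` and `1 - m ≤ a ≤ m`. -/
def ShiArr (m n : ℕ) : Set (Set (Fin n → ℝ)) :=
  {H | ∃ i j : Fin n, ∃ a : ℤ, 1 - (m : ℤ) ≤ a ∧ a ≤ (m : ℤ) ∧ i < j ∧ H = hyp n i j a}

/-- The flats of an arrangement: nonempty intersections of subcollections
(the empty intersection being the whole space). -/
def flats {n : ℕ} (A : Set (Set (Fin n → ℝ))) : Set (Set (Fin n → ℝ)) :=
  {F | F.Nonempty ∧ ∃ B ⊆ A, F = ⋂₀ B}

/-- The dimension of a flat, i.e. the dimension of the affine subspace it spans. -/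
noncomputable def flatDim {n : ℕ} (F : Set (Fin n → ℝ)) : ℕ :=
  Module.finrank ℝ (affineSpan ℝ F).direction

/-- The set of `k`-dimensional flats of an arrangement. -/
def Lk {n : ℕ} (A : Set (Set (Fin n → ℝ))) (k : ℕ) : Set (Set (Fin n → ℝ)) :=
  {F | F ∈ flats A ∧ flatDim F = k}

/-- A function `h : {1,…,n} → ℕ` is Shi-admissible (for `m`) if `0` is in its range and
for every value `a` of `h` below the maximum value, the least value `b` of `h` greater
than `a` satisfies `b ≤ a + m`, and moreover whenever `b = a + m` the smallest index
attaining `a` is smaller than the largest index attaining `b`. -/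
def ShiAdmissible (m : ℕ) {n : ℕ} (h : Fin n → ℕ) : Prop :=
  0 ∈ Set.range h ∧
    ∀ a ∈ Set.range h, a < sSup (Set.range h) →
      ∀ b, b = sInf {c ∈ Set.range h | a < c} →
        b ≤ a + m ∧
          (b = a + m →
            sInf (Fin.val '' {i | h i = a}) < sSup (Fin.val '' {j | h j = b}))

/-!
The hyperplanes of `S^m_n` containing the line `L(h) = -h + ℝ·(1, …, 1)` are the
`x_p - x_q = h_q - h_p` with `p < q` and `1 - m ≤ h_q - h_p ≤ m`; call such pairs `(p, q)`
edges. `L(h)` is the flat they cut out iff every function constant along edges is constant.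
When `min h = 0` this connectivity is exactly Shi-admissibility: the levels of two consecutive
values `a < b` of `h` are joined by an edge iff `b < a + m`, or `b = a + m` and an index of
value `a` precedes one of value `b`; otherwise the indicator of `{h ≥ b}` is constant along
edges.

Conversely, a 1-dimensional flat `F` is invariant under adding constants, hence a line
`x + ℝ·(1, …, 1)`. Adding to `x` the indicator of the coordinates at integral distance from
`x_0` stays in `F`, so all coordinate differences of `x` are integers and `F = L(h)` for
`h = max x - x`.
-/

section Admissibility

variable {m n : ℕ} {h : Fin n → ℕ}

lemma sInf_image_val_lt_sSup_image_val_iff {s t : Set (Fin n)} (hs : s.Nonempty)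
    (ht : t.Nonempty) :
    sInf (Fin.val '' s) < sSup (Fin.val '' t) ↔ ∃ p ∈ s, ∃ q ∈ t, p < q := by
  have hbdd : BddAbove (Fin.val '' t) := ((Set.toFinite t).image _).bddAbove
  constructor
  · intro hlt
    obtain ⟨p, hp, hpv⟩ := Nat.sInf_mem (hs.image Fin.val)
    obtain ⟨q, hq, hqv⟩ := Nat.sSup_mem (ht.image Fin.val) hbdd
    exact ⟨p, hp, q, hq, Fin.lt_def.2 (hpv ▸ hqv ▸ hlt)⟩
  · rintro ⟨p, hp, q, hq, hpq⟩
    calc sInf (Fin.val '' s) ≤ p := Nat.sInf_le ⟨p, hp, rfl⟩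
      _ < q := hpq
      _ ≤ sSup (Fin.val '' t) := le_csSup hbdd ⟨q, hq, rfl⟩

lemma shiAdmissible_iff :
    ShiAdmissible m h ↔ 0 ∈ range h ∧ ∀ p q, h p < h q → (∀ i, h i ≤ h p ∨ h q ≤ h i) →
      h q ≤ h p + m ∧ (h q = h p + m → ∃ p' q', h p' = h p ∧ h q' = h q ∧ p' < q') := by
  have hbdd : BddAbove (range h) := (Set.finite_range h).bddAbove
  refine and_congr_right fun _ => ⟨fun hadm p q hpq hgap => ?_, fun hstep a ha hmax b hb => ?_⟩
  · have hinf : h q = sInf {c ∈ range h | h p < c} := by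
      refine le_antisymm (le_csInf ⟨h q, ⟨q, rfl⟩, hpq⟩ ?_) (Nat.sInf_le ⟨⟨q, rfl⟩, hpq⟩)
      rintro _ ⟨⟨i, rfl⟩, hi⟩
      exact (hgap i).resolve_left hi.not_ge
    obtain ⟨hle, hidx⟩ := hadm (h p) ⟨p, rfl⟩ (hpq.trans_le (le_csSup hbdd ⟨q, rfl⟩)) _ hinf
    refine ⟨hle, fun heq => ?_⟩
    obtain ⟨p', hp', q', hq', hlt⟩ :=
      (sInf_image_val_lt_sSup_image_val_iff (s := {i | h i = h p}) (t := {j | h j = h q})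
      ⟨p, rfl⟩ ⟨q, rfl⟩).1 (hidx heq)
    exact ⟨p', q', hp', hq', hlt⟩
  · obtain ⟨p, rfl⟩ := ha
    have hne : {c ∈ range h | h p < c}.Nonempty :=
      ⟨_, Nat.sSup_mem (range_nonempty_iff_nonempty.2 ⟨p⟩) hbdd, hmax⟩
    obtain ⟨⟨q, rfl⟩, hpq⟩ := hb ▸ Nat.sInf_mem hne
    have hgap : ∀ i, h i ≤ h p ∨ h q ≤ h i := fun i =>
      (le_or_gt (h i) (h p)).imp_right fun hi => hb ▸ Nat.sInf_le ⟨⟨i, rfl⟩, hi⟩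
    obtain ⟨hle, hidx⟩ := hstep p q hpq hgap
    refine ⟨hb ▸ hle, fun heq => ?_⟩
    obtain ⟨p', q', hp', hq', hlt⟩ := hidx (hb ▸ heq)
    exact (sInf_image_val_lt_sSup_image_val_iff (s := {i | h i = h p}) (t := {j | h j = h q})
      ⟨p, rfl⟩ ⟨q, rfl⟩).2 ⟨p', hp', q', hq', hlt⟩

lemma exists_pred_value {k₀ k : Fin n} (hk : h k₀ < h k) :
    ∃ p, h p < h k ∧ ∀ i, h i ≤ h p ∨ h k ≤ h i := by
  classical
  obtain ⟨p, hp, hmax⟩ := Finset.exists_max_image (Finset.univ.filter fun i => h i < h k) h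
    ⟨k₀, by simpa using hk⟩
  refine ⟨p, by simpa using hp, fun i => ?_⟩
  by_cases hi : h i < h k
  · exact Or.inl (hmax i (by simpa using hi))
  · exact Or.inr (not_lt.1 hi)


/-- The hyperplane `x_p - x_q = h q - h p` belongs to `S^m_n`. -/
def ShiEdge (m : ℕ) (h : Fin n → ℕ) (p q : Fin n) : Prop :=
  p < q ∧ h p < h q + m ∧ h q ≤ h p + m

theorem ShiAdmissible.eq_of_forall_shiEdge {α : Type*} (hm : 1 ≤ m) (hadm : ShiAdmissible m h)
    (g : Fin n → α) (hg : ∀ p q, ShiEdge m h p q → g p = g q) (i j : Fin n) : g i = g j := by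
  obtain ⟨⟨k₀, hk₀⟩, hstep⟩ := shiAdmissible_iff.1 hadm
  have link : ∀ p q, h p < h q + m → h q < h p + m → g p = g q := by
    intro p q hpq hqp
    rcases lt_trichotomy p q with hlt | rfl | hlt
    · exact hg p q ⟨hlt, hpq, hqp.le⟩
    · rfl
    · exact (hg q p ⟨hlt, hqp, hpq.le⟩).symm
  suffices hconst : ∀ k, g k = g k₀ from (hconst i).trans (hconst j).symm
  intro k
  induction hk : h k using Nat.strong_induction_on generalizing k with
  | _ v IH =>
    obtain rfl | hv := Nat.eq_zero_or_pos v
    · exact link k k₀ (by omega) (by omega)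
    obtain ⟨p, hpk, hgap⟩ := exists_pred_value (k₀ := k₀) (hk₀ ▸ hk ▸ hv)
    obtain ⟨hle, hidx⟩ := hstep p k hpk hgap
    have hgp : g p = g k := by
      rcases hle.lt_or_eq with hlt | heq
      · exact link p k (by omega) hlt
      obtain ⟨p', q', hp', hq', hpq'⟩ := hidx heq
      calc g p = g p' := link p p' (by omega) (by omega)
        _ = g q' := hg p' q' ⟨hpq', by omega, by omega⟩
        _ = g k := link q' k (by omega) (by omega)
    exact hgp ▸ IH (h p) (hk ▸ hpk) p rfl

/-- If the consecutive values `h a < h b` violate admissibility, the indicator of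
`{i | h b ≤ h i}` is constant along `ShiEdge`s. -/
theorem shiAdmissible_of_forall_shiEdge (h0 : 0 ∈ range h)
    (hconn : ∀ g : Fin n → ℝ, (∀ p q, ShiEdge m h p q → g p = g q) → ∀ i j, g i = g j) :
    ShiAdmissible m h := by
  refine shiAdmissible_iff.2 ⟨h0, fun a b hab hgap => ?_⟩
  by_contra hfail
  let g : Fin n → ℝ := fun i => if h b ≤ h i then 1 else 0
  have hcut : ∀ p q, ShiEdge m h p q → (h b ≤ h p ↔ h b ≤ h q) := by
    rintro p q ⟨hpq, hp, hq⟩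
    rcases hgap p with hpa | hpb <;> rcases hgap q with hqa | hqb
    · omega
    · exact (hfail ⟨by omega, fun _ => ⟨p, q, by omega, by omega, hpq⟩⟩).elim
    · exact (hfail ⟨by omega, fun _ => by omega⟩).elim
    · omega
  have hg := hconn g fun p q hpq => by simp only [g, hcut p q hpq]
  have := hg b a
  simp only [g, le_refl, if_true, not_le.2 hab, if_false] at this
  exact one_ne_zero this

end Admissibility

section Lines

variable {m n : ℕ}

lemma mem_span_one_iff {ι : Type*} {v : ι → ℝ} :
    v ∈ Submodule.span ℝ {(1 : ι → ℝ)} ↔ ∀ i j, v i = v j := by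
  rw [Submodule.mem_span_singleton]
  refine ⟨by rintro ⟨a, rfl⟩ i j; simp, fun hv => ?_⟩
  rcases isEmpty_or_nonempty ι with hι | ⟨⟨i₀⟩⟩
  · exact ⟨0, Subsingleton.elim _ _⟩
  · exact ⟨v i₀, funext fun i => by simp [hv i₀ i]⟩

/-- The line `-c + ℝ·(1, …, 1)`. -/
def diagLine (c : Fin n → ℝ) : Set (Fin n → ℝ) :=
  {x | ∀ i j, x i + c i = x j + c j}

lemma neg_mem_diagLine (c : Fin n → ℝ) : -c ∈ diagLine c := by
  simp [diagLine]

lemma diagLine_eq_mk' (c : Fin n → ℝ) :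
    diagLine c = (AffineSubspace.mk' (-c) (Submodule.span ℝ {1}) : Set (Fin n → ℝ)) := by
  ext x
  rw [SetLike.mem_coe, AffineSubspace.mem_mk', vsub_eq_sub, sub_neg_eq_add, mem_span_one_iff]
  rfl

lemma flatDim_diagLine [NeZero n] (c : Fin n → ℝ) : flatDim (diagLine c) = 1 := by
  rw [flatDim, diagLine_eq_mk', AffineSubspace.affineSpan_coe, AffineSubspace.direction_mk',
    finrank_span_singleton one_ne_zero]

lemma diagLine_congr {c d : Fin n → ℝ} (hcd : ∀ i j, c i - d i = c j - d j) :
    diagLine c = diagLine d := by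
  ext x
  refine ⟨fun hx i j => ?_, fun hx i j => ?_⟩ <;>
    linarith [hx i j, hcd i j]

lemma eq_of_diagLine_eq {h₁ h₂ : Fin n → ℕ} (h0₁ : 0 ∈ range h₁) (h0₂ : 0 ∈ range h₂)
    (heq : diagLine (Nat.cast ∘ h₁) = diagLine (Nat.cast ∘ h₂)) : h₁ = h₂ := by
  obtain ⟨i₁, hi₁⟩ := h0₁
  obtain ⟨i₂, hi₂⟩ := h0₂
  have hmem : -(Nat.cast ∘ h₁) ∈ diagLine (Nat.cast ∘ h₂ : Fin n → ℝ) :=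
    heq ▸ neg_mem_diagLine _
  funext k
  have h₁k : -(h₁ k : ℝ) + h₂ k = -(h₁ i₁ : ℝ) + h₂ i₁ := hmem k i₁
  have h₂k : -(h₁ k : ℝ) + h₂ k = -(h₁ i₂ : ℝ) + h₂ i₂ := hmem k i₂
  have : (h₁ k : ℝ) = h₂ k := by
    simp only [hi₁, hi₂, Nat.cast_zero] at h₁k h₂k
    linarith [(h₂ i₁).cast_nonneg (α := ℝ), (h₁ i₂).cast_nonneg (α := ℝ)]
  exact_mod_cast this

variable {h : Fin n → ℕ}

lemma mem_hyp {x : Fin n → ℝ} {i j : Fin n} {a : ℤ} : x ∈ hyp n i j a ↔ x i - x j = a :=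
  Iff.rfl

/-- The hyperplanes of `S^m_n` containing `diagLine h`. -/
def shiEdges (m : ℕ) (h : Fin n → ℕ) : Set (Set (Fin n → ℝ)) :=
  {H | ∃ p q, ShiEdge m h p q ∧ H = hyp n p q ((h q : ℤ) - h p)}

lemma shiEdges_subset_shiArr : shiEdges m h ⊆ ShiArr m n := by
  rintro _ ⟨p, q, ⟨hpq, hp, hq⟩, rfl⟩
  exact ⟨p, q, _, by omega, by omega, hpq, rfl⟩

lemma mem_sInter_shiEdges {x : Fin n → ℝ} :
    x ∈ ⋂₀ shiEdges m h ↔ ∀ p q, ShiEdge m h p q → x p + h p = x q + h q := by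
  constructor
  · intro hx p q hpq
    have := mem_hyp.1 (hx _ ⟨p, q, hpq, rfl⟩)
    push_cast at this
    linarith
  · rintro hx _ ⟨p, q, hpq, rfl⟩
    rw [mem_hyp]
    push_cast
    linarith [hx p q hpq]

lemma sInter_shiEdges_eq_diagLine_iff :
    ⋂₀ shiEdges m h = diagLine (Nat.cast ∘ h) ↔
      ∀ g : Fin n → ℝ, (∀ p q, ShiEdge m h p q → g p = g q) → ∀ i j, g i = g j := by
  constructor
  · intro heq g hg i j
    have hmem : g - Nat.cast ∘ h ∈ diagLine (Nat.cast ∘ h) :=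
      heq ▸ mem_sInter_shiEdges.2 fun p q hpq => by simp [hg p q hpq]
    simpa using hmem i j
  · intro hconn
    refine subset_antisymm (fun x hx i j => hconn _ (mem_sInter_shiEdges.1 hx) i j) ?_
    exact fun x hx => mem_sInter_shiEdges.2 fun p q _ => hx p q

theorem shiAdmissible_iff_sInter_shiEdges_eq (hm : 1 ≤ m) (h0 : 0 ∈ range h) :
    ShiAdmissible m h ↔ ⋂₀ shiEdges m h = diagLine (Nat.cast ∘ h) := by
  rw [sInter_shiEdges_eq_diagLine_iff]
  exact ⟨fun hadm g => hadm.eq_of_forall_shiEdge hm g, shiAdmissible_of_forall_shiEdge h0⟩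

end Lines

section Flats

variable {m n : ℕ} {B : Set (Set (Fin n → ℝ))} {x : Fin n → ℝ}

lemma add_mem_sInter (hB : B ⊆ ShiArr m n) (hx : x ∈ ⋂₀ B) {v : Fin n → ℝ}
    (hv : ∀ p q a, hyp n p q a ∈ B → v p = v q) : x + v ∈ ⋂₀ B := by
  intro H hH
  obtain ⟨p, q, a, -, -, -, rfl⟩ := hB hH
  rw [mem_hyp, Pi.add_apply, Pi.add_apply, hv p q a hH, add_sub_add_right_eq_sub]
  exact hx _ hH

lemma sInter_eq_diagLine [NeZero n] (hB : B ⊆ ShiArr m n) (hx : x ∈ ⋂₀ B)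
    (hdim : flatDim (⋂₀ B) = 1) : ⋂₀ B = diagLine (-x) := by
  have hconst : ∀ t : ℝ, x + t • 1 ∈ ⋂₀ B := fun t =>
    add_mem_sInter hB hx fun _ _ _ _ => rfl
  have hdir : Submodule.span ℝ {1} = (affineSpan ℝ (⋂₀ B)).direction := by
    refine Submodule.eq_of_le_of_finrank_le ?_
      (by rw [← flatDim, hdim, finrank_span_singleton one_ne_zero])
    rw [Submodule.span_singleton_le_iff_mem]
    simpa using AffineSubspace.vsub_mem_direction (subset_affineSpan ℝ _ (hconst 1))
      (subset_affineSpan ℝ _ hx)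
  refine subset_antisymm (fun y hy => ?_) (fun y hy => ?_)
  · have hyx := AffineSubspace.vsub_mem_direction (subset_affineSpan ℝ _ hy)
      (subset_affineSpan ℝ _ hx)
    rw [← hdir, vsub_eq_sub, mem_span_one_iff] at hyx
    simpa [diagLine, sub_eq_add_neg] using hyx
  · convert hconst (y 0 - x 0) using 1
    funext i
    have := hy i 0
    simp only [Pi.neg_apply, Pi.add_apply, Pi.smul_apply, Pi.one_apply, smul_eq_mul] at this ⊢
    linarith

lemma exists_int_sub [NeZero n] (hB : B ⊆ ShiArr m n) (hx : x ∈ ⋂₀ B)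
    (hdim : flatDim (⋂₀ B) = 1) (i j : Fin n) : ∃ z : ℤ, x i - x j = z := by
  classical
  let S : Set (Fin n) := {k | ∃ z : ℤ, x k - x j = z}
  have hS : ∀ p q a, hyp n p q a ∈ B → (p ∈ S ↔ q ∈ S) := by
    intro p q a hH
    have hpq : x p - x q = a := hx _ hH
    exact ⟨fun ⟨z, hz⟩ => ⟨z - a, by push_cast; linarith⟩,
      fun ⟨z, hz⟩ => ⟨z + a, by push_cast; linarith⟩⟩
  have hmem := add_mem_sInter hB hx (v := S.indicator 1) fun p q a hH => by
    by_cases hp : p ∈ S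
    · simp [hp, (hS p q a hH).1 hp]
    · simp [hp, mt (hS p q a hH).2 hp]
  rw [sInter_eq_diagLine hB hx hdim] at hmem
  have hij : _ = _ := hmem i j
  have hjS : j ∈ S := ⟨0, by simp⟩
  by_contra hiS
  simp only [Pi.add_apply, Pi.neg_apply, Set.indicator_of_notMem (show i ∉ S from hiS),
    Set.indicator_of_mem hjS] at hij
  simp at hij

lemma exists_nat_sInter_eq_diagLine [NeZero n] (hB : B ⊆ ShiArr m n) (hx : x ∈ ⋂₀ B)
    (hdim : flatDim (⋂₀ B) = 1) :
    ∃ h : Fin n → ℕ, 0 ∈ range h ∧ ⋂₀ B = diagLine (Nat.cast ∘ h) := by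
  obtain ⟨k, -, hk⟩ := Finset.exists_max_image Finset.univ x Finset.univ_nonempty
  choose z hz using fun i => exists_int_sub hB hx hdim k i
  have hz0 : ∀ i, 0 ≤ z i := fun i => by
    have := hk i (Finset.mem_univ i)
    exact_mod_cast (hz i ▸ sub_nonneg.2 this)
  have hcast : ∀ i, ((z i).toNat : ℝ) = x k - x i := fun i => by
    rw [hz i]; exact_mod_cast Int.toNat_of_nonneg (hz0 i)
  refine ⟨fun i => (z i).toNat, ⟨k, by exact_mod_cast (hcast k).trans (sub_self _)⟩, ?_⟩
  rw [sInter_eq_diagLine hB hx hdim]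
  refine diagLine_congr fun i j => ?_
  simp only [Pi.neg_apply, Function.comp_apply, hcast]
  ring

lemma sInter_shiEdges_subset (hB : B ⊆ ShiArr m n) {h : Fin n → ℕ}
    (hBh : ⋂₀ B = diagLine (Nat.cast ∘ h)) : ⋂₀ shiEdges m h ⊆ ⋂₀ B := by
  refine Set.sInter_subset_sInter fun H hH => ?_
  obtain ⟨p, q, a, ha₁, ha₂, hpq, rfl⟩ := hB hH
  have hmem : (-(Nat.cast ∘ h) : Fin n → ℝ) ∈ hyp n p q a :=
    (hBh ▸ neg_mem_diagLine _ : _ ∈ ⋂₀ B) _ hH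
  have ha : a = (h q : ℤ) - h p := by
    rw [mem_hyp] at hmem
    simp only [Pi.neg_apply, Function.comp_apply] at hmem
    exact_mod_cast (by linarith : (a : ℝ) = (h q : ℝ) - h p)
  exact ⟨p, q, ⟨hpq, by omega, by omega⟩, ha ▸ rfl⟩

end Flats

/-- The map `h ↦ {x | x i + h i = x j + h j for all i, j}` is a bijection from the
Shi-admissible functions onto the `1`-dimensional flats of `S^m_n`. -/
theorem shi_one_flats_bij (m n : ℕ) (hm : 1 ≤ m) (hn : 1 ≤ n) :
    Set.BijOn
      (fun h : Fin n → ℕ =>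
        {x : Fin n → ℝ | ∀ i j : Fin n, x i + (h i : ℝ) = x j + (h j : ℝ)})
      {h : Fin n → ℕ | ShiAdmissible m h}
      (Lk (ShiArr m n) 1) := by
  have : NeZero n := ⟨by omega⟩
  refine ⟨fun h hadm => ?_,
    fun h₁ hadm₁ h₂ hadm₂ heq => eq_of_diagLine_eq hadm₁.1 hadm₂.1 heq, fun F hF => ?_⟩
  · have hB := (shiAdmissible_iff_sInter_shiEdges_eq hm hadm.1).1 hadm
    exact ⟨⟨⟨_, neg_mem_diagLine _⟩, shiEdges m h, shiEdges_subset_shiArr, hB.symm⟩,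
      flatDim_diagLine _⟩
  · obtain ⟨⟨⟨x, hx⟩, B, hB, rfl⟩, hdim⟩ := hF
    obtain ⟨h, h0, hBh⟩ := exists_nat_sInter_eq_diagLine hB hx hdim
    refine ⟨h, (shiAdmissible_iff_sInter_shiEdges_eq hm h0).2 ?_, hBh.symm⟩
    exact ((sInter_shiEdges_subset hB hBh).trans hBh.le).antisymm
      (fun y hy => mem_sInter_shiEdges.2 fun p q _ => hy p q)
end

section
/- Fix integers m ≥ 0, n ≥ 1 and k ≥ 1. Consider pairs (π, h) where π is a set partition of {1, …, n} into k nonempty blocks and h : {1, …, n} → ℕ is a function such that every block B of π satisfies: 0 ∈ h(B), and for every a ∈ h(B) with a < max h(B) there exists b ∈ h(B) with a < b ≤ a + m. Then the map sending (π, h) to the affine subspace ⋂_{B ∈ π} {x ∈ ℝ^n : x_i + h(i) = x_j + h(j) for all i, j ∈ B} is a bijection from the set of such pairs onto the set L_k(C^m_n) of k-dimensional flats of the extended Catalan arrangement C^m_n. -/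
open Set

/-- `π` is a set partition of `{1,…,n}` into `k` nonempty blocks. -/
def IsPartitionInto {n : ℕ} (π : Finset (Finset (Fin n))) (k : ℕ) : Prop :=
  π.card = k ∧ (∀ B ∈ π, B.Nonempty) ∧
    (↑π : Set (Finset (Fin n))).PairwiseDisjoint id ∧ ∀ v : Fin n, ∃ B ∈ π, v ∈ B

/-- The Catalan condition on a block `B`: `0 ∈ h(B)` and every `a ∈ h(B)` below
`max h(B)` is followed by some `b ∈ h(B)` with `a < b ≤ a + m`. -/
def CatalanBlockCond (m : ℕ) {n : ℕ} (h : Fin n → ℕ) (B : Finset (Fin n)) : Prop :=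
  0 ∈ h '' ↑B ∧
    ∀ a ∈ h '' ↑B, a < sSup (h '' ↑B) → ∃ b ∈ h '' ↑B, a < b ∧ b ≤ a + m

/-!
A flat `F = ⋂₀ Bs` of `C^m_n` through a point `x₀` is cut out by the equations
`x_i - x_j = x₀ i - x₀ j` for `i, j` joined by a chain of hyperplanes of `Bs`. The classes of
this relation form the partition `π`, and on each class `h i := max x₀ - x₀ i` is a natural
number; a class cannot contain a gap longer than `m` in the values of `x₀`, since no hyperplane
of `C^m_n` crosses it, which is the Catalan condition. Conversely, the Catalan condition links
any two points of a block by a chain of steps of length at most `m`, each a hyperplane of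
`C^m_n`. Both `π` (the pairs `i, j` for which `x_i - x_j` is constant on `F`) and `h` (normalised
by `0 ∈ h(B)`) can be read off `F`, and `dim F` is the number of blocks.
-/

open Relation

variable {n : ℕ}

section Partition

variable {π : Finset (Finset (Fin n))} {k : ℕ}

def SameBlock (π : Finset (Finset (Fin n))) (i j : Fin n) : Prop :=
  ∃ B ∈ π, i ∈ B ∧ j ∈ B

theorem IsPartitionInto.eq_of_mem (hπ : IsPartitionInto π k) {B B' : Finset (Fin n)}
    (hB : B ∈ π) (hB' : B' ∈ π) {i : Fin n} (hi : i ∈ B) (hi' : i ∈ B') : B = B' := by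
  by_contra hne
  exact Finset.disjoint_left.1 (hπ.2.2.1 hB hB' hne) hi hi'

theorem IsPartitionInto.mem_iff_sameBlock (hπ : IsPartitionInto π k) {B : Finset (Fin n)}
    (hB : B ∈ π) {i j : Fin n} (hi : i ∈ B) : j ∈ B ↔ SameBlock π i j := by
  refine ⟨fun hj => ⟨B, hB, hi, hj⟩, fun ⟨B', hB', hi', hj'⟩ => ?_⟩
  rwa [hπ.eq_of_mem hB hB' hi hi']

theorem IsPartitionInto.sameBlock_equivalence (hπ : IsPartitionInto π k) :
    Equivalence (SameBlock π) where
  refl i := let ⟨B, hB, hi⟩ := hπ.2.2.2 i; ⟨B, hB, hi, hi⟩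
  symm := fun ⟨B, hB, hi, hj⟩ => ⟨B, hB, hj, hi⟩
  trans := fun ⟨B, hB, hi, hj⟩ hjl => ⟨B, hB, hi, (hπ.mem_iff_sameBlock hB hj).2 hjl⟩

open Classical in
noncomputable def classesOf (r : Fin n → Fin n → Prop) : Finset (Finset (Fin n)) :=
  Finset.univ.image fun i => Finset.univ.filter (r i)

theorem mem_classesOf {r : Fin n → Fin n → Prop} {B : Finset (Fin n)} :
    B ∈ classesOf r ↔ ∃ i, ∀ j, j ∈ B ↔ r i j := by
  simp [classesOf, Finset.ext_iff, iff_comm]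

theorem exists_mem_classesOf (r : Fin n → Fin n → Prop) (i : Fin n) :
    ∃ B ∈ classesOf r, ∀ j, j ∈ B ↔ r i j := by
  classical
  exact ⟨Finset.univ.filter (r i), by simp [classesOf], by simp⟩

theorem Equivalence.sameBlock_classesOf {r : Fin n → Fin n → Prop} (hr : Equivalence r)
    {i j : Fin n} : SameBlock (classesOf r) i j ↔ r i j := by
  constructor
  · rintro ⟨B, hB, hi, hj⟩
    obtain ⟨l, hl⟩ := mem_classesOf.1 hB
    exact hr.trans (hr.symm ((hl i).1 hi)) ((hl j).1 hj)
  · intro hij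
    obtain ⟨B, hB, hBi⟩ := exists_mem_classesOf r i
    exact ⟨B, hB, (hBi i).2 (hr.refl i), (hBi j).2 hij⟩

theorem Equivalence.isPartitionInto_classesOf {r : Fin n → Fin n → Prop} (hr : Equivalence r) :
    IsPartitionInto (classesOf r) (classesOf r).card := by
  refine ⟨rfl, fun B hB => ?_, fun B hB B' hB' hne => ?_, fun i => ?_⟩
  · obtain ⟨i, hi⟩ := mem_classesOf.1 hB
    exact ⟨i, (hi i).2 (hr.refl i)⟩
  · obtain ⟨i, hi⟩ := mem_classesOf.1 hB
    obtain ⟨j, hj⟩ := mem_classesOf.1 hB'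
    refine Finset.disjoint_left.2 fun l hil hjl => hne (Finset.ext fun l' => ?_)
    rw [hi, hj]
    have hij := hr.trans ((hi l).1 hil) (hr.symm ((hj l).1 hjl))
    exact ⟨hr.trans (hr.symm hij), hr.trans hij⟩
  · obtain ⟨B, hB, hBi⟩ := exists_mem_classesOf r i
    exact ⟨B, hB, (hBi i).2 (hr.refl i)⟩

theorem IsPartitionInto.classesOf_sameBlock (hπ : IsPartitionInto π k) :
    classesOf (SameBlock π) = π := by
  ext B
  rw [mem_classesOf]
  constructor
  · rintro ⟨i, hi⟩
    obtain ⟨B', hB', hiB'⟩ := hπ.2.2.2 i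
    rwa [show B = B' from Finset.ext fun j => (hi j).trans (hπ.mem_iff_sameBlock hB' hiB').symm]
  · intro hB
    obtain ⟨i, hi⟩ := hπ.2.1 B hB
    exact ⟨i, fun j => hπ.mem_iff_sameBlock hB hi⟩

end Partition

section BlockFlat

variable {π : Finset (Finset (Fin n))} {k : ℕ}

def blockFlat (π : Finset (Finset (Fin n))) (c : Fin n → ℝ) : Set (Fin n → ℝ) :=
  ⋂ B ∈ π, {x | ∀ i ∈ B, ∀ j ∈ B, x i + c i = x j + c j}

theorem mem_blockFlat {c x : Fin n → ℝ} :
    x ∈ blockFlat π c ↔ ∀ i j, SameBlock π i j → x i + c i = x j + c j := by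
  simp only [blockFlat, Set.mem_iInter, Set.mem_ofPred_eq, SameBlock]
  exact ⟨fun H i j ⟨B, hB, hi, hj⟩ => H B hB i hi j hj,
    fun H B hB i hi j hj => H i j ⟨B, hB, hi, hj⟩⟩

theorem neg_mem_blockFlat (π : Finset (Finset (Fin n))) (c : Fin n → ℝ) : -c ∈ blockFlat π c :=
  mem_blockFlat.2 fun i j _ => by simp

def blockSubmodule (π : Finset (Finset (Fin n))) : Submodule ℝ (Fin n → ℝ) where
  carrier := {v | ∀ i j, SameBlock π i j → v i = v j}
  add_mem' ha hb i j hij := by simp [ha i j hij, hb i j hij]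
  zero_mem' _ _ _ := rfl
  smul_mem' a v hv i j hij := by simp [hv i j hij]

theorem blockFlat_eq_mk' (π : Finset (Finset (Fin n))) (c : Fin n → ℝ) :
    blockFlat π c = AffineSubspace.mk' (-c) (blockSubmodule π) := by
  ext x
  simp only [SetLike.mem_coe, AffineSubspace.mem_mk', mem_blockFlat, vsub_eq_sub, sub_neg_eq_add]
  rfl

theorem IsPartitionInto.finrank_blockSubmodule (hπ : IsPartitionInto π k) :
    Module.finrank ℝ (blockSubmodule π) = k := by
  choose blk hblk using fun i => let ⟨B, hB, hi⟩ := hπ.2.2.2 i; (⟨⟨B, hB⟩, hi⟩ : ∃ B : π, i ∈ B.1)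
  have sameBlock_iff : ∀ i j, SameBlock π i j ↔ blk i = blk j := fun i j => by
    rw [← hπ.mem_iff_sameBlock (blk i).2 (hblk i)]
    exact ⟨fun hj => Subtype.ext (hπ.eq_of_mem (blk i).2 (blk j).2 hj (hblk j)),
      fun h => h ▸ hblk j⟩
  have hsurj : Function.Surjective blk := fun B => by
    obtain ⟨i, hi⟩ := hπ.2.1 B B.2
    exact ⟨i, Subtype.ext (hπ.eq_of_mem (blk i).2 B.2 (hblk i) hi)⟩
  have hrange : LinearMap.range (LinearMap.funLeft ℝ ℝ blk) = blockSubmodule π := by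
    ext v
    refine ⟨?_, fun hv => ?_⟩
    · rintro ⟨c, rfl⟩ i j hij
      simp [LinearMap.funLeft_apply, (sameBlock_iff i j).1 hij]
    · obtain ⟨rep, hrep⟩ := hsurj.hasRightInverse
      exact ⟨v ∘ rep, funext fun i => hv _ _ ((sameBlock_iff _ _).2 (hrep (blk i)))⟩
  rw [← hrange, LinearMap.finrank_range_of_inj (LinearMap.funLeft_injective_of_surjective ℝ ℝ blk
    hsurj), Module.finrank_fintype_fun_eq_card, Fintype.card_coe, hπ.1]

theorem IsPartitionInto.flatDim_blockFlat (hπ : IsPartitionInto π k) (c : Fin n → ℝ) :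
    flatDim (blockFlat π c) = k := by
  rw [flatDim, blockFlat_eq_mk', AffineSubspace.affineSpan_coe, AffineSubspace.direction_mk',
    hπ.finrank_blockSubmodule]

theorem IsPartitionInto.sameBlock_iff (hπ : IsPartitionInto π k) (c : Fin n → ℝ) {i j : Fin n} :
    SameBlock π i j ↔ ∀ x ∈ blockFlat π c, ∀ y ∈ blockFlat π c, x i - x j = y i - y j := by
  classical
  refine ⟨fun hij x hx y hy => ?_, fun H => ?_⟩
  · linarith [mem_blockFlat.1 hx i j hij, mem_blockFlat.1 hy i j hij]
  by_contra hij
  have e := hπ.sameBlock_equivalence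
  -- moving the block of `i` by `1` stays in the flat but changes `x i - x j`
  let v : Fin n → ℝ := fun l => if SameBlock π i l then 1 else 0
  have hv : v ∈ blockSubmodule π := fun p q hpq => by
    have : SameBlock π i p ↔ SameBlock π i q := ⟨(e.trans · hpq), (e.trans · (e.symm hpq))⟩
    simp only [v, this]
  have hvx : v + -c ∈ blockFlat π c := by
    rw [blockFlat_eq_mk']
    exact AffineSubspace.vadd_mem_of_mem_direction (by rwa [AffineSubspace.direction_mk'])
      (AffineSubspace.self_mem_mk' _ _)
  have := H _ hvx _ (neg_mem_blockFlat π c)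
  simp [v, hij, e.refl i] at this

theorem IsPartitionInto.eq_of_blockFlat_eq {σ : Finset (Finset (Fin n))} {l : ℕ}
    (hπ : IsPartitionInto π k) (hσ : IsPartitionInto σ l) {c d : Fin n → ℝ}
    (heq : blockFlat π c = blockFlat σ d) : π = σ := by
  rw [← hπ.classesOf_sameBlock, ← hσ.classesOf_sameBlock]
  congr 1
  ext i j
  rw [hπ.sameBlock_iff c, hσ.sameBlock_iff d, heq]

theorem offsets_eq_of_blockFlat_eq {h g : Fin n → ℕ} (hπ : IsPartitionInto π k)
    (hh : ∀ B ∈ π, 0 ∈ h '' ↑B) (hg : ∀ B ∈ π, 0 ∈ g '' ↑B)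
    (heq : blockFlat π (fun i => (h i : ℝ)) = blockFlat π (fun i => (g i : ℝ))) : h = g := by
  have hx := heq ▸ neg_mem_blockFlat π fun i => (g i : ℝ)
  funext i
  obtain ⟨B, hB, hi⟩ := hπ.2.2.2 i
  obtain ⟨j₀, hj₀, hhj₀⟩ := hh B hB
  obtain ⟨j₁, hj₁, hgj₁⟩ := hg B hB
  have e₀ := mem_blockFlat.1 hx i j₀ ⟨B, hB, hi, hj₀⟩
  have e₁ := mem_blockFlat.1 hx i j₁ ⟨B, hB, hi, hj₁⟩
  simp only [Pi.neg_apply, hhj₀, hgj₁, Nat.cast_zero] at e₀ e₁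
  -- `h - g` is constant on `B`, equal to `-g j₀ ≤ 0` and to `h j₁ ≥ 0`
  have : (h i : ℝ) = g i := by linarith [(g j₀).cast_nonneg (α := ℝ), (h j₁).cast_nonneg (α := ℝ)]
  exact_mod_cast this

end BlockFlat

section Catalan

variable {m : ℕ}

theorem catalanBlockCond_iff {h : Fin n → ℕ} {B : Finset (Fin n)} :
    CatalanBlockCond m h B ↔ (∃ i ∈ B, h i = 0) ∧
      ∀ u ∈ B, ∀ v ∈ B, h u < h v → ∃ w ∈ B, h u < h w ∧ h w ≤ h u + m := by
  have hfin : (h '' ↑B).Finite := B.finite_toSet.image h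
  simp only [CatalanBlockCond, Set.mem_image, Finset.mem_coe, forall_exists_index, and_imp,
    forall_apply_eq_imp_iff₂, exists_exists_and_eq_and]
  refine and_congr_right fun ⟨i, hi, _⟩ => forall₂_congr fun u hu =>
    ⟨fun H v hv huv => ?_, fun H hlt => ?_⟩
  · exact H (huv.trans_le (le_csSup hfin.bddAbove ⟨v, hv, rfl⟩))
  · obtain ⟨v, hv, hvmax⟩ := (Set.Nonempty.image h ⟨i, hi⟩).csSup_mem hfin
    exact H v hv (hvmax ▸ hlt)

theorem CatalanBlockCond.apply_eq {α : Type*} {h : Fin n → ℕ} {B : Finset (Fin n)}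
    (hB : CatalanBlockCond m h B) {f : Fin n → α}
    (hnear : ∀ i ∈ B, ∀ j ∈ B, h i ≤ h j → h j ≤ h i + m → f i = f j)
    {i j : Fin n} (hi : i ∈ B) (hj : j ∈ B) : f i = f j := by
  have hgap := (catalanBlockCond_iff.1 hB).2
  suffices ∀ d, ∀ i ∈ B, ∀ j ∈ B, h i ≤ h j → h j ≤ h i + d → f i = f j by
    rcases le_total (h i) (h j) with hij | hji
    · exact this (h j - h i) i hi j hj hij (by omega)
    · exact (this (h i - h j) j hj i hi hji (by omega)).symm
  intro d
  induction d using Nat.strong_induction_on with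
  | _ d ih =>
  intro i hi j hj hij hjd
  by_cases hjm : h j ≤ h i + m
  · exact hnear i hi j hj hij hjm
  -- step to the next value of `h` on `B` above `h i`
  obtain ⟨u, hu, hiu, hum⟩ := hgap i hi j hj (by omega)
  exact (hnear i hi u hu hiu.le hum).trans
    (ih (h j - h u) (by omega) u hu j hj (by omega) (by omega))

theorem hyp_mem_catalanArr {i j : Fin n} (hij : i ≠ j) {a : ℤ} (ha : |a| ≤ m) :
    hyp n i j a ∈ CatalanArr m n := by
  obtain ⟨ha₁, ha₂⟩ := abs_le.1 ha
  rcases hij.lt_or_gt with hlt | hgt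
  · exact ⟨i, j, a, hlt, ha₁, ha₂, rfl⟩
  · refine ⟨j, i, -a, hgt, by omega, by omega, Set.ext fun x => ?_⟩
    simp only [hyp, Set.mem_ofPred_eq, Int.cast_neg]
    constructor <;> intro <;> linarith

theorem blockFlat_mem_flats {π : Finset (Finset (Fin n))} {h : Fin n → ℕ}
    (hcat : ∀ B ∈ π, CatalanBlockCond m h B) :
    blockFlat π (fun i => (h i : ℝ)) ∈ flats (CatalanArr m n) := by
  set F := blockFlat π fun i => (h i : ℝ)
  refine ⟨⟨_, neg_mem_blockFlat π _⟩, {H | H ∈ CatalanArr m n ∧ F ⊆ H}, fun H hH => hH.1,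
    Set.Subset.antisymm (fun x hx H hH => hH.2 hx) fun x hx => ?_⟩
  refine mem_blockFlat.2 fun i j ⟨B, hB, hi, hj⟩ =>
    (hcat B hB).apply_eq (f := fun i => x i + h i) (fun p hp q hq hpq hqm => ?_) hi hj
  rcases eq_or_ne p q with rfl | hne
  · rfl
  have hH : hyp n p q ((h q : ℤ) - h p) ∈ CatalanArr m n :=
    hyp_mem_catalanArr hne (by rw [abs_le]; omega)
  have hFH : F ⊆ hyp n p q ((h q : ℤ) - h p) := fun y hy => by
    have := mem_blockFlat.1 hy p q ⟨B, hB, hp, hq⟩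
    simp only [hyp, Set.mem_ofPred_eq, Int.cast_sub, Int.cast_natCast]
    linarith
  have : x p - x q = (h q : ℝ) - h p := by simpa [hyp] using hx _ ⟨hH, hFH⟩
  linarith

end Catalan

theorem Relation.EqvGen.exists_boundary {α : Type*} {r : α → α → Prop} {P : α → Prop} {a b : α}
    (hab : EqvGen r a b) (ha : P a) (hb : ¬P b) : ∃ p q, (r p q ∨ r q p) ∧ P p ∧ ¬P q := by
  by_contra! H
  have hP : Equivalence fun a b => P a ↔ P b := ⟨fun _ => Iff.rfl, Iff.symm, Iff.trans⟩
  exact hb ((hP.eqvGen_iff.1 (EqvGen.mono (fun p q hpq => ⟨H p q (.inl hpq), H q p (.inr hpq)⟩)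
    a b hab)).1 ha)

theorem Equivalence.exists_nat_offset {r : Fin n → Fin n → Prop} (hr : Equivalence r)
    {x : Fin n → ℝ} (hx : ∀ i j, r i j → ∃ d : ℤ, x i - x j = d) :
    ∃ h : Fin n → ℕ, (∀ i j, r i j → x i + h i = x j + h j) ∧ ∀ i, ∃ j, r i j ∧ h j = 0 := by
  classical
  have hne i : (Finset.univ.filter (r i)).Nonempty := ⟨i, by simpa using hr.refl i⟩
  let top i := (Finset.univ.filter (r i)).sup' (hne i) x
  have top_eq i j (hij : r i j) : top i = top j :=
    Finset.sup'_congr _ (Finset.ext fun l => by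
      simpa using ⟨hr.trans (hr.symm hij), hr.trans hij⟩) fun _ _ => rfl
  have hoffset i : ∃ d : ℕ, top i - x i = d := by
    obtain ⟨j, hj, hjtop⟩ := Finset.exists_mem_eq_sup' (hne i) x
    obtain ⟨d, hd⟩ := hx j i (hr.symm (by simpa using hj))
    have hd₀ : (0 : ℝ) ≤ d :=
      hd ▸ hjtop ▸ sub_nonneg.2 (Finset.le_sup' x (by simpa using hr.refl i))
    lift d to ℕ using (by exact_mod_cast hd₀)
    exact ⟨d, by simpa [top, hjtop] using hd⟩
  choose h hh using hoffset
  refine ⟨h, fun i j hij => by linarith [hh i, hh j, top_eq i j hij], fun i => ?_⟩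
  obtain ⟨j, hj, hjtop⟩ := Finset.exists_mem_eq_sup' (hne i) x
  have hij : r i j := by simpa using hj
  have := hh j
  rw [← top_eq i j hij, show top i = x j from hjtop, sub_self] at this
  exact ⟨j, hij, by exact_mod_cast this.symm⟩

section Surjective

variable {m : ℕ} {Bs : Set (Set (Fin n → ℝ))}

def HypJoined (m : ℕ) (Bs : Set (Set (Fin n → ℝ))) (i j : Fin n) : Prop :=
  ∃ a : ℤ, |a| ≤ m ∧ hyp n i j a ∈ Bs

theorem HypJoined.abs_sub_le {i j : Fin n} (hij : HypJoined m Bs i j) {x : Fin n → ℝ}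
    (hx : x ∈ ⋂₀ Bs) : |x i - x j| ≤ m := by
  obtain ⟨a, ha, hH⟩ := hij
  rw [show x i - x j = a from hx _ hH]
  exact_mod_cast ha

theorem exists_int_of_eqvGen_hypJoined {i j : Fin n} (hij : EqvGen (HypJoined m Bs) i j) :
    ∃ d : ℤ, ∀ x ∈ ⋂₀ Bs, x i - x j = d := by
  have hR : Equivalence fun i j => ∃ d : ℤ, ∀ x ∈ ⋂₀ Bs, x i - x j = d :=
    ⟨fun i => ⟨0, by simp⟩,
     fun ⟨d, hd⟩ => ⟨-d, fun x hx => by push_cast; linarith [hd x hx]⟩,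
     fun ⟨d, hd⟩ ⟨e, he⟩ => ⟨d + e, fun x hx => by push_cast; linarith [hd x hx, he x hx]⟩⟩
  exact hR.eqvGen_iff.1 (EqvGen.mono (fun i j ⟨a, _, hH⟩ => ⟨a, fun x hx => hx _ hH⟩) i j hij)

theorem sInter_eq_of_subset_catalanArr (hBs : Bs ⊆ CatalanArr m n) {x₀ : Fin n → ℝ}
    (hx₀ : x₀ ∈ ⋂₀ Bs) :
    ⋂₀ Bs = {x | ∀ i j, EqvGen (HypJoined m Bs) i j → x i - x j = x₀ i - x₀ j} := by
  ext x
  refine ⟨fun hx i j hij => ?_, fun hx H hH => ?_⟩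
  · obtain ⟨d, hd⟩ := exists_int_of_eqvGen_hypJoined hij
    rw [hd x hx, hd x₀ hx₀]
  · obtain ⟨i, j, a, -, ha₁, ha₂, rfl⟩ := hBs hH
    have hij : HypJoined m Bs i j := ⟨a, abs_le.2 ⟨ha₁, ha₂⟩, hH⟩
    exact (hx i j (.rel _ _ hij)).trans (hx₀ _ hH)

theorem exists_hypJoined_near_below {x₀ : Fin n → ℝ} (hx₀ : x₀ ∈ ⋂₀ Bs) {u v : Fin n}
    (hvu : EqvGen (HypJoined m Bs) v u) (hlt : x₀ v < x₀ u) :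
    ∃ w, EqvGen (HypJoined m Bs) w u ∧ x₀ w < x₀ u ∧ x₀ u ≤ x₀ w + m := by
  -- a hyperplane of `Bs` leaving `{p | x₀ p < x₀ u}` inside the class of `u` starts near `x₀ u`
  obtain ⟨p, q, hpq, ⟨hpu, hp⟩, hq⟩ := hvu.exists_boundary
    (P := fun p => EqvGen (HypJoined m Bs) p u ∧ x₀ p < x₀ u) ⟨hvu, hlt⟩ fun h => h.2.false
  have hdist : |x₀ p - x₀ q| ≤ m :=
    hpq.elim (·.abs_sub_le hx₀) fun h => abs_sub_comm (x₀ p) _ ▸ h.abs_sub_le hx₀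
  have hqu : EqvGen (HypJoined m Bs) q u := by
    rcases hpq with h | h
    exacts [(EqvGen.symm _ _ (.rel _ _ h)).trans _ _ _ hpu, (EqvGen.rel _ _ h).trans _ _ _ hpu]
  have : x₀ u ≤ x₀ q := not_lt.1 fun h => hq ⟨hqu, h⟩
  exact ⟨p, hpu, hp, by linarith [le_abs_self (x₀ q - x₀ p), abs_sub_comm (x₀ p) (x₀ q)]⟩

theorem exists_blockFlat_eq_sInter (hBs : Bs ⊆ CatalanArr m n) (hne : (⋂₀ Bs).Nonempty) :
    ∃ π : Finset (Finset (Fin n)), ∃ h : Fin n → ℕ, IsPartitionInto π π.card ∧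
      (∀ B ∈ π, CatalanBlockCond m h B) ∧ blockFlat π (fun i => (h i : ℝ)) = ⋂₀ Bs := by
  obtain ⟨x₀, hx₀⟩ := hne
  have hr := EqvGen.is_equivalence (HypJoined m Bs)
  obtain ⟨h, hh, hzero⟩ := hr.exists_nat_offset fun i j hij =>
    (exists_int_of_eqvGen_hypJoined hij).imp fun d hd => hd x₀ hx₀
  refine ⟨classesOf (EqvGen (HypJoined m Bs)), h, hr.isPartitionInto_classesOf, fun B hB => ?_, ?_⟩
  · obtain ⟨i, hi⟩ := mem_classesOf.1 hB
    simp only [catalanBlockCond_iff, hi]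
    refine ⟨hzero i, fun u hu v hv huv => ?_⟩
    have hvu : x₀ v < x₀ u := by
      have : (h u : ℝ) < h v := by exact_mod_cast huv
      linarith [hh u v (hr.trans (hr.symm hu) hv)]
    obtain ⟨w, hwu, hw, hwm⟩ := exists_hypJoined_near_below hx₀ (hr.trans (hr.symm hv) hu) hvu
    have := hh w u hwu
    exact ⟨w, hr.trans hu (hr.symm hwu), by exact_mod_cast (by linarith : (h u : ℝ) < h w),
      by exact_mod_cast (by linarith : (h w : ℝ) ≤ h u + m)⟩
  · rw [sInter_eq_of_subset_catalanArr hBs hx₀]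
    ext x
    simp only [mem_blockFlat, hr.sameBlock_classesOf, Set.mem_ofPred_eq]
    exact forall₃_congr fun i j hij => by constructor <;> intro <;> linarith [hh i j hij]

end Surjective

theorem catalan_flats_bij_general (m n k : ℕ) :
    Set.BijOn
      (fun p : Finset (Finset (Fin n)) × (Fin n → ℕ) =>
        ⋂ B ∈ p.1, {x : Fin n → ℝ |
          ∀ i ∈ B, ∀ j ∈ B, x i + (p.2 i : ℝ) = x j + (p.2 j : ℝ)})
      {p : Finset (Finset (Fin n)) × (Fin n → ℕ) |
        IsPartitionInto p.1 k ∧ ∀ B ∈ p.1, CatalanBlockCond m p.2 B}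
      (Lk (CatalanArr m n) k) := by
  change Set.BijOn (fun p : Finset (Finset (Fin n)) × (Fin n → ℕ) =>
    blockFlat p.1 fun i => (p.2 i : ℝ)) _ _
  refine ⟨fun p ⟨hπ, hcat⟩ => ⟨blockFlat_mem_flats hcat, hπ.flatDim_blockFlat _⟩, ?_, ?_⟩
  · rintro ⟨π, h⟩ ⟨hπ, hcat⟩ ⟨σ, g⟩ ⟨hσ, hcat'⟩ heq
    obtain rfl : π = σ := hπ.eq_of_blockFlat_eq hσ heq
    obtain rfl : h = g := offsets_eq_of_blockFlat_eq hπ (fun B hB => (hcat B hB).1)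
      (fun B hB => (hcat' B hB).1) heq
    rfl
  · rintro F ⟨⟨hne, Bs, hBs, rfl⟩, hdim⟩
    obtain ⟨π, h, hπ, hcat, hF⟩ := exists_blockFlat_eq_sInter hBs hne
    have hk : π.card = k := by rw [← hdim, ← hF, hπ.flatDim_blockFlat]
    exact ⟨(π, h), ⟨hk ▸ hπ, hcat⟩, hF⟩

/-- The map `(π, h) ↦ ⋂_{B ∈ π} {x | x i + h i = x j + h j for all i, j ∈ B}` is a
bijection from the pairs of a partition of `{1,…,n}` into `k` blocks and a function `h`
satisfying the Catalan condition on each block, onto the `k`-dimensional flats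
of `C^m_n`. -/
theorem catalan_flats_bij (m n k : ℕ) (hn : 1 ≤ n) (hk : 1 ≤ k) :
    Set.BijOn
      (fun p : Finset (Finset (Fin n)) × (Fin n → ℕ) =>
        ⋂ B ∈ p.1, {x : Fin n → ℝ |
          ∀ i ∈ B, ∀ j ∈ B, x i + (p.2 i : ℝ) = x j + (p.2 j : ℝ)})
      {p : Finset (Finset (Fin n)) × (Fin n → ℕ) |
        IsPartitionInto p.1 k ∧ ∀ B ∈ p.1, CatalanBlockCond m p.2 B}
      (Lk (CatalanArr m n) k) :=
  catalan_flats_bij_general m n k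
end
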